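/- arXiv:1507.02821 — 4 statements merged into one kernel-verified Lean document; each statement's English description precedes it below -/
import Mathlib

section
/- Let A ∈ ℂ^{M×N} be a dictionary with coherence μ_A and let x ∈ ℂ^N be nonzero. Then ‖A^H A x‖_∞ ≥ (1 − μ_A(δ(x) − 1)) · ‖x‖_∞. -/
/-! Evaluate `Aᴴ A x` at a coordinate `k` where `|x k| = ‖x‖_∞`. The Gram matrix `Aᴴ A` has unit
diagonal and off-diagonal entries of modulus at most `μ`, so by the reverse triangle inequality
`|(Aᴴ A x) k| ≥ |x k| - μ ∑_{j ≠ k} |x j| = ‖x‖_∞ - μ (δ(x) - 1) ‖x‖_∞`. -/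

open Matrix

/-- The δ-density of a vector `x ∈ ℂ^N`: the ratio of its ℓ¹-norm to its ℓ∞-norm
(the norm on `Fin N → ℂ` is the sup-norm); for `x = 0` this is `0/0 = 0`. -/
noncomputable def density {N : ℕ} (x : Fin N → ℂ) : ℝ :=
  (∑ i, ‖x i‖) / ‖x‖

/-- The inner product `a_i^H b_j` between the `i`-th column of `A` and the `j`-th column of `B`. -/
noncomputable def colIP {M Na Nb : ℕ} (A : Matrix (Fin M) (Fin Na) ℂ)
    (B : Matrix (Fin M) (Fin Nb) ℂ) (i : Fin Na) (j : Fin Nb) : ℂ :=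
  ∑ m, (starRingEnd ℂ) (A m i) * B m j

/-- A dictionary: all columns have unit Euclidean norm. -/
def UnitColumns {M N : ℕ} (A : Matrix (Fin M) (Fin N) ℂ) : Prop :=
  ∀ j, colIP A A j j = 1

/-- `μ` is the coherence of the dictionary `A`: the maximum of `|a_i^H a_j|` over `i ≠ j`. -/
def IsCoherence {M N : ℕ} (A : Matrix (Fin M) (Fin N) ℂ) (μ : ℝ) : Prop :=
  IsGreatest {r : ℝ | ∃ i j, i ≠ j ∧ r = ‖colIP A A i j‖} μ

/-- `μ` is the mutual coherence of the dictionaries `A` and `B`: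
the maximum of `|a_i^H b_j|` over all `i, j`. -/
def IsMutualCoherence {M Na Nb : ℕ} (A : Matrix (Fin M) (Fin Na) ℂ)
    (B : Matrix (Fin M) (Fin Nb) ℂ) (μ : ℝ) : Prop :=
  IsGreatest {r : ℝ | ∃ i j, r = ‖colIP A B i j‖} μ

open Finset

theorem conjTranspose_mul_apply_eq_colIP {M Na Nb : ℕ} (A : Matrix (Fin M) (Fin Na) ℂ)
    (B : Matrix (Fin M) (Fin Nb) ℂ) (i : Fin Na) (j : Fin Nb) :
    (Aᴴ * B) i j = colIP A B i j := by
  simp only [mul_apply, conjTranspose_apply, colIP, RCLike.star_def]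

theorem IsCoherence.norm_colIP_le {M N : ℕ} {A : Matrix (Fin M) (Fin N) ℂ} {μ : ℝ}
    (hμ : IsCoherence A μ) {i j : Fin N} (hij : i ≠ j) : ‖colIP A A i j‖ ≤ μ :=
  hμ.2 ⟨i, j, hij, rfl⟩

theorem density_mul_norm {N : ℕ} {x : Fin N → ℂ} (hx : x ≠ 0) :
    density x * ‖x‖ = ∑ i, ‖x i‖ :=
  div_mul_cancel₀ _ (norm_ne_zero_iff.mpr hx)

theorem norm_apply_sub_mul_sum_erase_le_norm_mulVec_apply {n 𝕜 : Type*} [Fintype n]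
    [DecidableEq n] [NormedField 𝕜] (G : Matrix n n 𝕜) {k : n} {μ : ℝ} (hdiag : G k k = 1)
    (hoff : ∀ j, j ≠ k → ‖G k j‖ ≤ μ) (x : n → 𝕜) :
    ‖x k‖ - μ * ∑ j ∈ univ.erase k, ‖x j‖ ≤ ‖(G *ᵥ x) k‖ := by
  have hsplit : (G *ᵥ x) k = x k + ∑ j ∈ univ.erase k, G k j * x j := by
    rw [mulVec, dotProduct, ← add_sum_erase _ _ (mem_univ k), hdiag, one_mul]
  have hrest : ‖∑ j ∈ univ.erase k, G k j * x j‖ ≤ μ * ∑ j ∈ univ.erase k, ‖x j‖ := by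
    rw [mul_sum]
    refine (norm_sum_le _ _).trans (sum_le_sum fun j hj => ?_)
    rw [norm_mul]
    exact mul_le_mul_of_nonneg_right (hoff j (ne_of_mem_erase hj)) (norm_nonneg _)
  rw [hsplit]
  linarith [norm_sub_le_norm_add (x k) (∑ j ∈ univ.erase k, G k j * x j)]

theorem linf_lower_bound {M N : ℕ} (A : Matrix (Fin M) (Fin N) ℂ) (μ : ℝ)
    (hA : UnitColumns A) (hμ : IsCoherence A μ) (x : Fin N → ℂ) (hx : x ≠ 0) :
    (1 - μ * (density x - 1)) * ‖x‖ ≤ ‖(Aᴴ * A).mulVec x‖ := by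
  have : Nonempty (Fin N) := (Function.ne_iff.mp hx).nonempty
  obtain ⟨k, hk⟩ : ∃ k, ‖x k‖ = ‖x‖ := (IsGreatest.pi_norm x).1
  have hrow := norm_apply_sub_mul_sum_erase_le_norm_mulVec_apply (Aᴴ * A) (k := k) (μ := μ)
    (by rw [conjTranspose_mul_apply_eq_colIP, hA k])
    (fun j hj => by rw [conjTranspose_mul_apply_eq_colIP]; exact hμ.norm_colIP_le hj.symm) x
  have hoff : ∑ j ∈ univ.erase k, ‖x j‖ = (density x - 1) * ‖x‖ := by
    rw [sub_one_mul, density_mul_norm hx, ← hk, sum_erase_eq_sub (mem_univ k)]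
  calc (1 - μ * (density x - 1)) * ‖x‖ = ‖x k‖ - μ * ∑ j ∈ univ.erase k, ‖x j‖ := by
        rw [hoff, hk]; ring
    _ ≤ ‖((Aᴴ * A) *ᵥ x) k‖ := hrow
    _ ≤ ‖(Aᴴ * A) *ᵥ x‖ := norm_le_pi_norm _ k
end

section
/- (Kernel result) Let A ∈ ℂ^{M×N} be a dictionary with coherence μ_A ≠ 0 and let x ∈ ℂ^N be nonzero. If δ(x) < 1 + 1/μ_A, then x is not in the kernel of A, i.e., A x ≠ 0. -/
/-!
If `A x = 0`, then `Aᴴ A x = 0`; since the Gram matrix `Aᴴ A` has unit diagonal and off-diagonal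
entries of modulus at most `μ`, the row through a largest entry `x i` gives
`‖x‖∞ = |x i| ≤ μ (‖x‖₁ - ‖x‖∞)`, i.e. `δ(x) ≥ 1 + 1/μ`.
-/

open Matrix

open Finset

lemma colIP_eq_conjTranspose_mul {M Na Nb : ℕ} (A : Matrix (Fin M) (Fin Na) ℂ)
    (B : Matrix (Fin M) (Fin Nb) ℂ) (i : Fin Na) (j : Fin Nb) :
    colIP A B i j = (Aᴴ * B) i j := by
  simp [colIP, mul_apply]

lemma sum_colIP_mul_eq_zero_of_mulVec_eq_zero {M Na Nb : ℕ} (A : Matrix (Fin M) (Fin Na) ℂ)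
    {B : Matrix (Fin M) (Fin Nb) ℂ} {x : Fin Nb → ℂ} (hx : B *ᵥ x = 0) (i : Fin Na) :
    ∑ j, colIP A B i j * x j = 0 := by
  have : ((Aᴴ * B) *ᵥ x) i = 0 := by rw [← mulVec_mulVec, hx, mulVec_zero, Pi.zero_apply]
  simpa [colIP_eq_conjTranspose_mul, mulVec, dotProduct] using this

lemma norm_le_mul_sum_erase_of_mulVec_eq_zero {M N : ℕ} {A : Matrix (Fin M) (Fin N) ℂ} {μ : ℝ}
    (hA : UnitColumns A) (hμ : ∀ i j, i ≠ j → ‖colIP A A i j‖ ≤ μ)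
    {x : Fin N → ℂ} (hx : A *ᵥ x = 0) (i : Fin N) :
    ‖x i‖ ≤ μ * ∑ j ∈ univ.erase i, ‖x j‖ := by
  have hrow := sum_colIP_mul_eq_zero_of_mulVec_eq_zero A hx i
  rw [← add_sum_erase _ _ (mem_univ i), hA i, one_mul, add_eq_zero_iff_eq_neg] at hrow
  calc ‖x i‖ = ‖∑ j ∈ univ.erase i, colIP A A i j * x j‖ := by rw [hrow, norm_neg]
    _ ≤ ∑ j ∈ univ.erase i, ‖colIP A A i j‖ * ‖x j‖ := by
      simpa only [norm_mul] using norm_sum_le (univ.erase i) fun j => colIP A A i j * x j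
    _ ≤ ∑ j ∈ univ.erase i, μ * ‖x j‖ := by
      gcongr with j hj
      exact hμ i j (ne_of_mem_erase hj).symm
    _ = μ * ∑ j ∈ univ.erase i, ‖x j‖ := (mul_sum _ _ _).symm

lemma one_add_one_div_le_density {N : ℕ} {x : Fin N → ℂ} (hx : x ≠ 0) {μ : ℝ}
    (hbound : ∀ i, ‖x i‖ ≤ μ * ∑ j ∈ univ.erase i, ‖x j‖) :
    1 + 1 / μ ≤ density x := by
  obtain ⟨k, -⟩ := Function.ne_iff.mp hx
  have : Nonempty (Fin N) := ⟨k⟩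
  obtain ⟨⟨i, hi⟩, -⟩ := IsGreatest.pi_norm x
  simp only at hi
  have hpos : 0 < ‖x‖ := norm_pos_iff.mpr hx
  have hrest : ∑ j ∈ univ.erase i, ‖x j‖ = (∑ j, ‖x j‖) - ‖x‖ := by
    rw [← hi, ← add_sum_erase _ _ (mem_univ i)]; ring
  have hle := hbound i
  rw [hi, hrest] at hle
  have hμ : 0 < μ := by
    by_contra! hμ
    nlinarith [sum_nonneg fun j (_ : j ∈ univ.erase i) => norm_nonneg (x j)]
  have hdiv : ‖x‖ / μ ≤ (∑ j, ‖x j‖) - ‖x‖ := by rw [div_le_iff₀ hμ]; linarith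
  rw [density, le_div_iff₀ hpos, add_mul, one_mul, one_div_mul_eq_div]
  linarith

theorem kernel_result_general {M N : ℕ} (A : Matrix (Fin M) (Fin N) ℂ) (μ : ℝ)
    (hA : UnitColumns A) (hμ : IsCoherence A μ)
    (x : Fin N → ℂ) (hx : x ≠ 0) (hδ : density x < 1 + 1 / μ) :
    A.mulVec x ≠ 0 := fun hAx =>
  hδ.not_ge <| one_add_one_div_le_density hx <|
    norm_le_mul_sum_erase_of_mulVec_eq_zero hA (fun i j hij => hμ.2 ⟨i, j, hij, rfl⟩) hAx

theorem kernel_result {M N : ℕ} (A : Matrix (Fin M) (Fin N) ℂ) (μ : ℝ)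
    (hA : UnitColumns A) (hμ : IsCoherence A μ) (hμ0 : μ ≠ 0)
    (x : Fin N → ℂ) (hx : x ≠ 0) (hδ : density x < 1 + 1 / μ) :
    A.mulVec x ≠ 0 :=
  kernel_result_general A μ hA hμ x hx hδ
end

section
/- Let A, B ∈ ℂ^{M×M} be unitary matrices whose mutual coherence equals μ_m = 1/√M (maximally incoherent orthonormal bases), and let x, z ∈ ℂ^M be nonzero vectors satisfying A x = B z. Then M ≤ δ(x) · δ(z). -/
open Matrix

/-! Since `Aᴴ A = 1`, the relation `A x = B z` gives `x = (Aᴴ B) z`, and the entries of `Aᴴ B` are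
the column inner products `a_iᴴ b_j`, of modulus at most `μ`. Hence `‖x‖_∞ ≤ μ ‖z‖₁`, and
symmetrically `‖z‖_∞ ≤ μ ‖x‖₁`. Multiplying the two bounds gives `1 ≤ μ² δ(x) δ(z)`, and
`μ² = 1/M`. -/

section ColumnInnerProducts

variable {M Na Nb : ℕ} (A : Matrix (Fin M) (Fin Na) ℂ) (B : Matrix (Fin M) (Fin Nb) ℂ)

theorem colIP_eq_conjTranspose_mul_apply (i : Fin Na) (j : Fin Nb) :
    colIP A B i j = (Aᴴ * B) i j := by
  simp only [colIP, mul_apply, conjTranspose_apply, RCLike.star_def]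

theorem colIP_swap (i : Fin Na) (j : Fin Nb) : colIP B A j i = starRingEnd ℂ (colIP A B i j) := by
  simp only [colIP, map_sum, map_mul, Complex.conj_conj, mul_comm]

theorem norm_colIP_swap (i : Fin Na) (j : Fin Nb) : ‖colIP B A j i‖ = ‖colIP A B i j‖ := by
  rw [colIP_swap, RCLike.norm_conj]

variable {A B}

theorem apply_eq_sum_colIP_mul (hA : Aᴴ * A = 1) {x : Fin Na → ℂ} {z : Fin Nb → ℂ}
    (hxz : A *ᵥ x = B *ᵥ z) (i : Fin Na) : x i = ∑ j, colIP A B i j * z j := by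
  have hx : (Aᴴ * B) *ᵥ z = x := by
    rw [← mulVec_mulVec, ← hxz, mulVec_mulVec, hA, one_mulVec]
  simp only [← hx, mulVec, dotProduct, colIP_eq_conjTranspose_mul_apply]

namespace IsMutualCoherence

variable {μ : ℝ}

theorem symm (hμ : IsMutualCoherence A B μ) : IsMutualCoherence B A μ := by
  have hset : {r : ℝ | ∃ j i, r = ‖colIP B A j i‖} = {r : ℝ | ∃ i j, r = ‖colIP A B i j‖} :=
    Set.ext fun _ =>
      ⟨fun ⟨j, i, h⟩ => ⟨i, j, h.trans (norm_colIP_swap A B i j)⟩,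
        fun ⟨i, j, h⟩ => ⟨j, i, h.trans (norm_colIP_swap A B i j).symm⟩⟩
  unfold IsMutualCoherence
  rwa [hset]

theorem norm_colIP_le (hμ : IsMutualCoherence A B μ) (i : Fin Na) (j : Fin Nb) :
    ‖colIP A B i j‖ ≤ μ :=
  hμ.2 ⟨i, j, rfl⟩

theorem nonneg (hμ : IsMutualCoherence A B μ) : 0 ≤ μ := by
  obtain ⟨i, j, hμij⟩ := hμ.1
  exact hμij ▸ norm_nonneg _

theorem norm_le_mul_sum_norm (hμ : IsMutualCoherence A B μ) (hA : Aᴴ * A = 1)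
    {x : Fin Na → ℂ} {z : Fin Nb → ℂ} (hxz : A *ᵥ x = B *ᵥ z) :
    ‖x‖ ≤ μ * ∑ j, ‖z j‖ := by
  refine (pi_norm_le_iff_of_nonneg (mul_nonneg hμ.nonneg (by positivity))).mpr fun i => ?_
  calc ‖x i‖ = ‖∑ j, colIP A B i j * z j‖ := by rw [apply_eq_sum_colIP_mul hA hxz i]
    _ ≤ ∑ j, ‖colIP A B i j‖ * ‖z j‖ := by
        simpa only [norm_mul] using norm_sum_le Finset.univ fun j => colIP A B i j * z j
    _ ≤ ∑ j, μ * ‖z j‖ := by gcongr with j; exact hμ.norm_colIP_le i j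
    _ = μ * ∑ j, ‖z j‖ := by rw [Finset.mul_sum]

end IsMutualCoherence

end ColumnInnerProducts

theorem inv_sq_le_density_mul_density {N N' : ℕ} {x : Fin N → ℂ} {z : Fin N' → ℂ} {μ : ℝ}
    (hx : x ≠ 0) (hz : z ≠ 0) (hxz : ‖x‖ ≤ μ * ∑ j, ‖z j‖) (hzx : ‖z‖ ≤ μ * ∑ i, ‖x i‖) :
    (μ ^ 2)⁻¹ ≤ density x * density z := by
  have hpos : 0 < ‖x‖ * ‖z‖ := mul_pos (norm_pos_iff.mpr hx) (norm_pos_iff.mpr hz)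
  have hprod : ‖x‖ * ‖z‖ ≤ μ ^ 2 * ((∑ i, ‖x i‖) * ∑ j, ‖z j‖) :=
    calc ‖x‖ * ‖z‖ ≤ (μ * ∑ j, ‖z j‖) * (μ * ∑ i, ‖x i‖) :=
          mul_le_mul hxz hzx (norm_nonneg z) (hxz.trans' (norm_nonneg x))
      _ = μ ^ 2 * ((∑ i, ‖x i‖) * ∑ j, ‖z j‖) := by ring
  have hμ : 0 < μ ^ 2 := by
    refine (sq_nonneg μ).lt_of_ne fun h => ?_
    rw [← h, zero_mul] at hprod
    exact hpos.not_ge hprod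
  rw [density, density, div_mul_div_comm, le_div_iff₀ hpos, inv_mul_le_iff₀ hμ]
  exact hprod

theorem uncertainty_relation_max_incoherent_onb_pair {M : ℕ} (A B : Matrix (Fin M) (Fin M) ℂ)
    (hA : A ∈ Matrix.unitaryGroup (Fin M) ℂ) (hB : B ∈ Matrix.unitaryGroup (Fin M) ℂ)
    (hμm : IsMutualCoherence A B (1 / Real.sqrt M))
    (x z : Fin M → ℂ) (hx : x ≠ 0) (hz : z ≠ 0)
    (hxz : A.mulVec x = B.mulVec z) :
    (M : ℝ) ≤ density x * density z := by
  have hμ_sq : ((1 / Real.sqrt M) ^ 2)⁻¹ = (M : ℝ) := by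
    rw [one_div, inv_pow, inv_inv, Real.sq_sqrt (Nat.cast_nonneg M)]
  rw [← hμ_sq]
  exact inv_sq_le_density_mul_density hx hz (hμm.norm_le_mul_sum_norm hA.1 hxz)
    (hμm.symm.norm_le_mul_sum_norm hB.1 hxz.symm)
end

section
/- Let A ∈ ℂ^{M×N} be a dictionary with coherence μ_A and let S ⊆ {1,…,N} satisfy μ_A(|S| − 1) < 1. Then the Gram matrix A_S^H A_S is invertible, and for every vector w ∈ ℂ^{|S|}, ‖(A_S^H A_S)^{−1} w‖₂ ≤ ‖w‖₂ / (1 − μ_A(|S| − 1)). -/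
open Matrix

/-- The submatrix `A_S` of `A` consisting of the columns indexed by `S`. -/
noncomputable def subMat {M N : ℕ} (A : Matrix (Fin M) (Fin N) ℂ) (S : Finset (Fin N)) :
    Matrix (Fin M) {i // i ∈ S} ℂ :=
  fun m i => A m i.val

/-- The Gram matrix `A_S^H A_S`. -/
noncomputable def gram {M N : ℕ} (A : Matrix (Fin M) (Fin N) ℂ) (S : Finset (Fin N)) :
    Matrix {i // i ∈ S} {i // i ∈ S} ℂ :=
  (subMat A S)ᴴ * subMat A S

/-- The orthogonal projection `P_S = A_S (A_S^H A_S)⁻¹ A_S^H` of `ℂ^M` onto the span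
of the columns `{a_j : j ∈ S}` (for invertible Gram matrix `A_S^H A_S`). -/
noncomputable def projMat {M N : ℕ} (A : Matrix (Fin M) (Fin N) ℂ) (S : Finset (Fin N)) :
    Matrix (Fin M) (Fin M) ℂ :=
  subMat A S * (gram A S)⁻¹ * (subMat A S)ᴴ

/-- The correlation `a_i^H v` between the `i`-th column of `A` and a vector `v ∈ ℂ^M`. -/
noncomputable def corr {M N : ℕ} (A : Matrix (Fin M) (Fin N) ℂ) (i : Fin N)
    (v : Fin M → ℂ) : ℂ :=
  ∑ m, (starRingEnd ℂ) (A m i) * v m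

/-- The Euclidean (ℓ²) norm of a vector. -/
noncomputable def l2norm {ι : Type*} [Fintype ι] (v : ι → ℂ) : ℝ :=
  Real.sqrt (∑ i, ‖v i‖ ^ 2)

/-!
The Gram matrix `G = A_Sᴴ A_S` has unit diagonal and off-diagonal entries of modulus at most `μ`.
Hence `|(G x - x)_i| ≤ μ ∑_{j ≠ i} |x_j|`, and Cauchy–Schwarz on each row gives
`‖G x - x‖₂ ≤ μ (|S| - 1) ‖x‖₂`. The triangle inequality then yields
`‖G x‖₂ ≥ (1 - μ (|S| - 1)) ‖x‖₂` with a positive constant, which makes `G` injective and,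
applied to `x = G⁻¹ w`, bounds `‖G⁻¹ w‖₂`.
-/

open Finset

theorem l2norm_eq_norm_toLp {ι : Type*} [Fintype ι] (v : ι → ℂ) :
    l2norm v = ‖WithLp.toLp 2 v‖ := by
  simp [l2norm, EuclideanSpace.norm_eq]

theorem sum_sq_sum_erase_le {ι : Type*} [Fintype ι] [DecidableEq ι] (y : ι → ℝ) :
    ∑ i, (∑ j ∈ univ.erase i, y j) ^ 2 ≤ ((Fintype.card ι : ℝ) - 1) ^ 2 * ∑ i, y i ^ 2 := by
  calc ∑ i, (∑ j ∈ univ.erase i, y j) ^ 2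
      ≤ ∑ i, ((Fintype.card ι : ℝ) - 1) * ∑ j ∈ univ.erase i, y j ^ 2 := by
        refine sum_le_sum fun i _ => ?_
        have hcard : ((#(univ.erase i) : ℕ) : ℝ) = (Fintype.card ι : ℝ) - 1 := by
          rw [card_erase_of_mem (mem_univ i), card_univ,
            Nat.cast_pred (Fintype.card_pos_iff.mpr ⟨i⟩)]
        simpa only [hcard] using sq_sum_le_card_mul_sum_sq (s := univ.erase i) (f := y)
    _ = ((Fintype.card ι : ℝ) - 1) ^ 2 * ∑ i, y i ^ 2 := by
        simp only [sum_erase_eq_sub (mem_univ _), sum_sub_distrib, sum_const, card_univ,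
          nsmul_eq_mul, ← mul_sum]
        ring

section UnitDiagonal

variable {ι : Type*} [Fintype ι] [DecidableEq ι] {G : Matrix ι ι ℂ} {μ : ℝ}

theorem norm_mulVec_sub_self_apply_le (hdiag : ∀ i, G i i = 1)
    (hoff : ∀ i j, i ≠ j → ‖G i j‖ ≤ μ) (x : ι → ℂ) (i : ι) :
    ‖(G *ᵥ x - x) i‖ ≤ μ * ∑ j ∈ univ.erase i, ‖x j‖ := by
  have hsplit : (G *ᵥ x - x) i = ∑ j ∈ univ.erase i, G i j * x j := by
    rw [Pi.sub_apply, mulVec, dotProduct, ← sum_erase_add _ _ (mem_univ i), hdiag i, one_mul,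
      add_sub_cancel_right]
  rw [hsplit, mul_sum]
  refine (norm_sum_le _ _).trans (sum_le_sum fun j hj => ?_)
  rw [norm_mul]
  exact mul_le_mul_of_nonneg_right (hoff i j (ne_of_mem_erase hj).symm) (norm_nonneg _)

theorem l2norm_mulVec_sub_self_le (hdiag : ∀ i, G i i = 1)
    (hoff : ∀ i j, i ≠ j → ‖G i j‖ ≤ μ) (hμ : 0 ≤ μ) (x : ι → ℂ) :
    l2norm (G *ᵥ x - x) ≤ μ * ((Fintype.card ι : ℝ) - 1) * l2norm x := by
  have hsq : ∑ i, ‖(G *ᵥ x - x) i‖ ^ 2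
      ≤ (μ * ((Fintype.card ι : ℝ) - 1)) ^ 2 * ∑ i, ‖x i‖ ^ 2 :=
    calc ∑ i, ‖(G *ᵥ x - x) i‖ ^ 2
        ≤ ∑ i, (μ * ∑ j ∈ univ.erase i, ‖x j‖) ^ 2 := sum_le_sum fun i _ =>
          pow_le_pow_left₀ (norm_nonneg _) (norm_mulVec_sub_self_apply_le hdiag hoff x i) 2
      _ = μ ^ 2 * ∑ i, (∑ j ∈ univ.erase i, ‖x j‖) ^ 2 := by rw [mul_sum]; simp only [mul_pow]
      _ ≤ μ ^ 2 * (((Fintype.card ι : ℝ) - 1) ^ 2 * ∑ i, ‖x i‖ ^ 2) :=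
          mul_le_mul_of_nonneg_left (sum_sq_sum_erase_le _) (sq_nonneg μ)
      _ = _ := by ring
  have habs : |μ * ((Fintype.card ι : ℝ) - 1)| * l2norm x
      = μ * ((Fintype.card ι : ℝ) - 1) * l2norm x := by
    rcases isEmpty_or_nonempty ι with hι | hι
    · simp [l2norm]
    · have hcard : (1 : ℝ) ≤ Fintype.card ι := by exact_mod_cast Fintype.card_pos
      rw [abs_of_nonneg (mul_nonneg hμ (sub_nonneg.mpr hcard))]
  calc l2norm (G *ᵥ x - x)
      ≤ √((μ * ((Fintype.card ι : ℝ) - 1)) ^ 2 * ∑ i, ‖x i‖ ^ 2) := Real.sqrt_le_sqrt hsq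
    _ = |μ * ((Fintype.card ι : ℝ) - 1)| * l2norm x := by
        rw [Real.sqrt_mul (sq_nonneg _), Real.sqrt_sq_eq_abs, l2norm]
    _ = _ := habs

theorem mul_l2norm_le_l2norm_mulVec (hdiag : ∀ i, G i i = 1)
    (hoff : ∀ i j, i ≠ j → ‖G i j‖ ≤ μ) (hμ : 0 ≤ μ) (x : ι → ℂ) :
    (1 - μ * ((Fintype.card ι : ℝ) - 1)) * l2norm x ≤ l2norm (G *ᵥ x) := by
  have hdist := l2norm_mulVec_sub_self_le hdiag hoff hμ x
  have htri := norm_le_norm_add_norm_sub (WithLp.toLp 2 (G *ᵥ x)) (WithLp.toLp 2 x)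
  rw [← WithLp.toLp_sub, ← l2norm_eq_norm_toLp, ← l2norm_eq_norm_toLp,
    ← l2norm_eq_norm_toLp] at htri
  linarith

theorem isUnit_of_diag_eq_one_of_norm_offDiag_le (hdiag : ∀ i, G i i = 1)
    (hoff : ∀ i j, i ≠ j → ‖G i j‖ ≤ μ) (hμ : 0 ≤ μ) (hc : μ * ((Fintype.card ι : ℝ) - 1) < 1) :
    IsUnit G := by
  refine mulVec_injective_iff_isUnit.mp fun x y hxy => ?_
  have hbound := mul_l2norm_le_l2norm_mulVec hdiag hoff hμ (x - y)
  rw [mulVec_sub, hxy, sub_self, l2norm_eq_norm_toLp, l2norm_eq_norm_toLp, WithLp.toLp_zero,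
    norm_zero] at hbound
  have hzero : ‖WithLp.toLp 2 (x - y)‖ ≤ 0 :=
    le_of_mul_le_mul_left (hbound.trans_eq (mul_zero _).symm) (sub_pos.mpr hc)
  simpa [sub_eq_zero] using hzero

theorem l2norm_inv_mulVec_le (hdiag : ∀ i, G i i = 1)
    (hoff : ∀ i j, i ≠ j → ‖G i j‖ ≤ μ) (hμ : 0 ≤ μ) (hc : μ * ((Fintype.card ι : ℝ) - 1) < 1)
    (w : ι → ℂ) :
    l2norm (G⁻¹ *ᵥ w) ≤ l2norm w / (1 - μ * ((Fintype.card ι : ℝ) - 1)) := by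
  have hdet := (isUnit_iff_isUnit_det G).mp (isUnit_of_diag_eq_one_of_norm_offDiag_le hdiag hoff hμ hc)
  have hbound := mul_l2norm_le_l2norm_mulVec hdiag hoff hμ (G⁻¹ *ᵥ w)
  rw [mulVec_mulVec, mul_nonsing_inv G hdet, one_mulVec] at hbound
  rwa [le_div_iff₀' (sub_pos.mpr hc)]

end UnitDiagonal

theorem gram_apply {M N : ℕ} (A : Matrix (Fin M) (Fin N) ℂ) (S : Finset (Fin N))
    (i j : {i // i ∈ S}) : gram A S i j = colIP A A i j := by
  simp [_root_.gram, subMat, colIP, mul_apply]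

theorem IsCoherence.nonneg {M N : ℕ} {A : Matrix (Fin M) (Fin N) ℂ} {μ : ℝ}
    (hμ : IsCoherence A μ) : 0 ≤ μ := by
  obtain ⟨i, j, -, rfl⟩ := hμ.1
  exact norm_nonneg _

theorem gram_invertible_and_inv_l2_bound {M N : ℕ} (A : Matrix (Fin M) (Fin N) ℂ) (μ : ℝ)
    (hA : UnitColumns A) (hμ : IsCoherence A μ) (S : Finset (Fin N))
    (hS : μ * ((S.card : ℝ) - 1) < 1) :
    IsUnit (gram A S) ∧
      ∀ w : {i // i ∈ S} → ℂ,
        l2norm ((gram A S)⁻¹.mulVec w) ≤ l2norm w / (1 - μ * ((S.card : ℝ) - 1)) := by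
  have hdiag (i : {i // i ∈ S}) : gram A S i i = 1 := by rw [gram_apply]; exact hA i
  have hoff (i j : {i // i ∈ S}) (hij : i ≠ j) : ‖gram A S i j‖ ≤ μ := by
    rw [gram_apply]
    exact hμ.2 ⟨i, j, Subtype.coe_ne_coe.mpr hij, rfl⟩
  rw [← Fintype.card_coe] at hS ⊢
  exact ⟨isUnit_of_diag_eq_one_of_norm_offDiag_le hdiag hoff hμ.nonneg hS,
    l2norm_inv_mulVec_le hdiag hoff hμ.nonneg hS⟩
end
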